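/- arXiv:2411.04438 — 4 statements merged into one kernel-verified Lean document; each statement's English description precedes it below -/
import Mathlib

section
/- Every line ℓ_{(a,b,c,d)} with ad − bc = 1 and a ≠ 0 and 1 + bc ≠ 0 can be reparameterized (after swapping the second and third coordinates of ℝ³) as the line through the point (a/(1+bc), −ab/(1+bc), 0) with direction (ac/(1+bc), a/(1+bc), 1); in particular its new parameters (a', b', c', d') satisfy a' = d' = a/(1+bc). -/
/-! Swapping the last two coordinates sends `ℓ(t)` to `(a + c t, t, b + d t)`, whose third
coordinate `s = b + d t` is itself an affine parameter of the line because `ad = 1 + bc ≠ 0`.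
Substituting `t = (s - b) · a / (1 + bc)` gives the stated point and
direction. -/

theorem range_comp_sub_mul {K α : Type*} [Field K] (f : K → α) (b : K) {k : K} (hk : k ≠ 0) :
    Set.range (fun s => f ((s - b) * k)) = Set.range f :=
  ((mul_right_surjective₀ hk).comp (Equiv.subRight b).surjective).range_comp f

theorem swap_sl2Line_reparam {K : Type*} [Field K] {a b c d : K} (hbc : 1 + b * c ≠ 0)
    (h : a * d - b * c = 1) (s : K) :
    (![a + c * ((s - b) * (a / (1 + b * c))), (s - b) * (a / (1 + b * c)),
        b + d * ((s - b) * (a / (1 + b * c)))] : Fin 3 → K) =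
      ![a / (1 + b * c), -(a * b) / (1 + b * c), 0] +
        s • ![a * c / (1 + b * c), a / (1 + b * c), 1] := by
  generalize he : 1 + b * c = e at hbc ⊢
  ext i
  fin_cases i <;>
    simp only [Fin.zero_eta, Fin.mk_one, Fin.reduceFinMk, Fin.isValue, Matrix.cons_val_zero,
      Matrix.cons_val_one, Matrix.cons_val, Matrix.smul_cons, Matrix.smul_empty, smul_eq_mul,
      mul_one, zero_add, Pi.add_apply] <;>
    field_simp
  · linear_combination (-a) * he
  · ring
  · linear_combination (s - b) * (h + he)

theorem stmt4_general (a b c d : ℝ) (hbc : 1 + b*c ≠ 0) (h : a*d - b*c = 1) :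
    (fun x : Fin 3 → ℝ => ![x 0, x 2, x 1]) ''
        (Set.range fun t : ℝ => (![a + c*t, b + d*t, t] : Fin 3 → ℝ)) =
      Set.range (fun s : ℝ =>
        (![a/(1+b*c), -(a*b)/(1+b*c), 0] : Fin 3 → ℝ) +
          s • (![a*c/(1+b*c), a/(1+b*c), 1] : Fin 3 → ℝ)) := by
  have ha : a ≠ 0 := by
    rintro rfl
    exact hbc (by linarith)
  rw [← Set.range_comp, ← range_comp_sub_mul _ b (div_ne_zero ha hbc)]
  exact congrArg Set.range (funext (swap_sl2Line_reparam hbc h))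

/-- Every SL₂-line ℓ_{(a,b,c,d)} with ad − bc = 1, a ≠ 0, 1+bc ≠ 0 can, after swapping
the second and third coordinates, be reparameterized as the line through
(a/(1+bc), −ab/(1+bc), 0) with direction (ac/(1+bc), a/(1+bc), 1); in particular
the new parameters satisfy a' = d' = a/(1+bc). -/
theorem stmt4 (a b c d : ℝ) (ha : a ≠ 0) (hbc : 1 + b*c ≠ 0) (h : a*d - b*c = 1) :
    (fun x : Fin 3 → ℝ => ![x 0, x 2, x 1]) ''
        (Set.range fun t : ℝ => (![a + c*t, b + d*t, t] : Fin 3 → ℝ)) =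
      Set.range (fun s : ℝ =>
        (![a/(1+b*c), -(a*b)/(1+b*c), 0] : Fin 3 → ℝ) +
          s • (![a*c/(1+b*c), a/(1+b*c), 1] : Fin 3 → ℝ)) :=
  stmt4_general a b c d hbc h
end

section
/- Fix z = (z₁, z₂, z₃) ∈ ℝ³ and a C¹ curve γ = (γ₁, γ₂, γ₃) with γ₁(z₃) ≠ 0. For x ∈ ℝ³ define C_x(t) = (x₁γ₃(t) − x₃γ₁(t), x₁γ₂(t) − x₂γ₁(t), t). Then the set of tangent vectors {C_x'(z₃) : x ∈ ℝ³ with C_x(z₃) = z} is contained in the affine line v₀ + ℝ·w, i.e., all such tangent vectors lie in a common 2-plane spanned by w = (γ₃'(z₃) − γ₃(z₃)γ₁(z₃)^{-1}γ₁'(z₃), γ₂'(z₃) − γ₂(z₃)γ₁(z₃)^{-1}γ₁'(z₃), 0) and v₀ = (z₁γ₁(z₃)^{-1}γ₁'(z₃), z₂γ₁(z₃)^{-1}γ₁'(z₃), 1). -/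
/-- Tangent vectors at z of the curves C_x through z all lie in the affine line v₀ + ℝw
(hence a common 2-plane spanned by w and v₀). -/
theorem stmt6 (γ₁ γ₂ γ₃ : ℝ → ℝ)
    (h1 : Differentiable ℝ γ₁) (h2 : Differentiable ℝ γ₂) (h3 : Differentiable ℝ γ₃)
    (z : Fin 3 → ℝ) (hγ : γ₁ (z 2) ≠ 0) (x : Fin 3 → ℝ)
    (hx : (![x 0 * γ₃ (z 2) - x 2 * γ₁ (z 2),
            x 0 * γ₂ (z 2) - x 1 * γ₁ (z 2), z 2] : Fin 3 → ℝ) = z) :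
    ∃ s : ℝ,
      deriv (fun t : ℝ =>
          (![x 0 * γ₃ t - x 2 * γ₁ t, x 0 * γ₂ t - x 1 * γ₁ t, t] : Fin 3 → ℝ)) (z 2) =
        (![z 0 * (γ₁ (z 2))⁻¹ * deriv γ₁ (z 2),
           z 1 * (γ₁ (z 2))⁻¹ * deriv γ₁ (z 2), 1] : Fin 3 → ℝ) +
          s • (![deriv γ₃ (z 2) - γ₃ (z 2) * (γ₁ (z 2))⁻¹ * deriv γ₁ (z 2),
                 deriv γ₂ (z 2) - γ₂ (z 2) * (γ₁ (z 2))⁻¹ * deriv γ₁ (z 2), 0] :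
                Fin 3 → ℝ) := by
  have hz0 : z 0 = x 0 * γ₃ (z 2) - x 2 * γ₁ (z 2) := by rw [← hx]; simp
  have hz1 : z 1 = x 0 * γ₂ (z 2) - x 1 * γ₁ (z 2) := by rw [← hx]; simp
  refine ⟨x 0, ?_⟩
  have hd : HasDerivAt (fun t : ℝ =>
      (![x 0 * γ₃ t - x 2 * γ₁ t, x 0 * γ₂ t - x 1 * γ₁ t, t] : Fin 3 → ℝ)) 
      (![x 0 * deriv γ₃ (z 2) - x 2 * deriv γ₁ (z 2),
         x 0 * deriv γ₂ (z 2) - x 1 * deriv γ₁ (z 2), 1] : Fin 3 → ℝ) (z 2) := by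
    rw [hasDerivAt_pi]
    intro i
    fin_cases i <;> simp only [Matrix.cons_val_zero, Matrix.cons_val_one, Matrix.head_cons,
      Matrix.cons_val_two, Matrix.tail_cons, Fin.mk_zero, Fin.mk_one]
    · exact (((h3 (z 2)).hasDerivAt.const_mul (x 0)).sub
        ((h1 (z 2)).hasDerivAt.const_mul (x 2)))
    · exact (((h2 (z 2)).hasDerivAt.const_mul (x 0)).sub
        ((h1 (z 2)).hasDerivAt.const_mul (x 1)))
    · exact hasDerivAt_id (z 2)
  rw [hd.deriv]
  funext i
  fin_cases i <;>
    simp [hz0, hz1] <;> field_simp <;> ring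
end

section
/- For a point p = (p₁, p₂, p₃) ∈ ℝ³, every SL₂-line ℓ_{(a,b,c,d)} (with ad − bc = 1) passing through p, i.e. with p = (a + cp₃, b + dp₃, p₃), is contained in the plane through p with normal direction (p₂, −p₁, 1), namely {x ∈ ℝ³ : (x − p)·(p₂, −p₁, 1) = 0}. -/
/-- If p lies on the SL₂-line ℓ_{(a,b,c,d)} (ad − bc = 1), then every SL₂-line through p
is contained in the plane through p with normal (p₂, −p₁, 1). -/
theorem stmt10 (a b c d p₁ p₂ p₃ : ℝ) (h : a*d - b*c = 1)
    (hp : (![p₁, p₂, p₃] : Fin 3 → ℝ) ∈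
      Set.range (fun t : ℝ => (![a + c*t, b + d*t, t] : Fin 3 → ℝ))) :
    ∀ a' b' c' d' : ℝ, a'*d' - b'*c' = 1 →
      (![p₁, p₂, p₃] : Fin 3 → ℝ) ∈
        Set.range (fun t : ℝ => (![a' + c'*t, b' + d'*t, t] : Fin 3 → ℝ)) →
      Set.range (fun t : ℝ => (![a' + c'*t, b' + d'*t, t] : Fin 3 → ℝ)) ⊆
        {x : Fin 3 → ℝ |
          (x 0 - p₁) * p₂ + (x 1 - p₂) * (-p₁) + (x 2 - p₃) * 1 = 0} := by
  intro a' b' c' d' h' hp' x hx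
  obtain ⟨s, hs⟩ := hp'
  obtain ⟨t, ht⟩ := hx
  have h0 := congrFun hs 0
  have h1 := congrFun hs 1
  have h2 := congrFun hs 2
  simp only [Matrix.cons_val_zero, Matrix.cons_val_one, Matrix.head_cons,
    Matrix.cons_val_two, Matrix.tail_cons] at h0 h1 h2
  subst ht
  simp only [Set.mem_setOf_eq, Matrix.cons_val_zero, Matrix.cons_val_one, Matrix.head_cons,
    Matrix.cons_val_two, Matrix.tail_cons]
  subst h2
  subst h0; subst h1; linear_combination (s - t) * h'
end

section
/- Let ℓ = ℓ_{(a,b,c,d)} with ad − bc = 1 and let u ∈ ℝ. Then the line ℓ' with parameters (1+u)(a,b,c,d) intersects the horizontal line ℓ(p) = p + span(p₁, p₂, 0) for every p = (a+cp₃, b+dp₃, p₃) ∈ ℓ; i.e., the lines with parameters in span(a,b,c,d) form a ruling of the regulus R(ℓ) = ⋃_{p∈ℓ} ℓ(p). -/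
/-- For ℓ = ℓ_{(a,b,c,d)} with ad − bc = 1 and any u ∈ ℝ, the line with parameters
(1+u)(a,b,c,d) meets the horizontal line ℓ(p) = p + span(p₁,p₂,0) for every
p = (a+cp₃, b+dp₃, p₃) ∈ ℓ. -/
theorem stmt11 (a b c d : ℝ) (h : a*d - b*c = 1) (u p₃ : ℝ) :
    ∃ q : Fin 3 → ℝ,
      q ∈ Set.range (fun t : ℝ =>
        (![(1+u)*a + (1+u)*c*t, (1+u)*b + (1+u)*d*t, t] : Fin 3 → ℝ)) ∧
      ∃ s : ℝ, q = (![a + c*p₃, b + d*p₃, p₃] : Fin 3 → ℝ) +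
        s • (![a + c*p₃, b + d*p₃, 0] : Fin 3 → ℝ) := by
  refine ⟨_, ⟨p₃, rfl⟩, u, ?_⟩
  funext i
  fin_cases i <;> simp <;> ring
end
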